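/- With the notation of the linear-forcing rod example: let P(z) = Γ(M, αM z/(aT))/(M−1)! and I*(z) = M(α z/(aT) − 1 − log(α z/(aT))). Then lim_{z→∞} log P(z) / I*(z) = −1. -/

import Mathlib

/-!
With `x = αMz/(aT)` and `m = M - 1`, the tail integral is squeezed,
`x^m e^{-x} ≤ Γ(M, x) ≤ x^m e^{-x} · x/(x - m)`, the upper bound coming from the tangent-line
estimate `t^m ≤ x^m e^{m(t/x - 1)}`. Hence `log P(z) = -x + O(log x)`, while
`I*(z) = x - M log x + O(1)`, so numerator and denominator are asymptotic to `-x` and `x`.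
-/

open Real Filter

/-- The upper incomplete gamma function `Γ(a, x) = ∫_x^∞ t^{a-1} e^{-t} dt`. -/
noncomputable def upperGamma (a x : ℝ) : ℝ :=
  ∫ t in Set.Ioi x, t ^ (a - 1) * Real.exp (-t)

open MeasureTheory Set Asymptotics

section IncompleteGammaBounds

variable {m x : ℝ}

lemma integrableOn_rpow_mul_exp_neg_Ioi (hm : -1 < m) (hx : 0 ≤ x) :
    IntegrableOn (fun t : ℝ => t ^ m * exp (-t)) (Ioi x) := by
  refine ((GammaIntegral_convergent (s := m + 1) (by linarith)).mono_set
    (Ioi_subset_Ioi hx)).congr_fun (fun t _ => ?_) measurableSet_Ioi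
  simp [mul_comm]

lemma rpow_mul_exp_neg_le_integral_Ioi (hm : 0 ≤ m) (hx : 0 ≤ x) :
    x ^ m * exp (-x) ≤ ∫ t in Ioi x, t ^ m * exp (-t) := by
  calc x ^ m * exp (-x) = ∫ t in Ioi x, x ^ m * exp (-t) := by
        rw [integral_const_mul, integral_exp_neg_Ioi]
    _ ≤ _ := by
      refine setIntegral_mono_on ((integrableOn_exp_neg_Ioi x).const_mul _)
        (integrableOn_rpow_mul_exp_neg_Ioi (by linarith) hx) measurableSet_Ioi fun t ht => ?_
      gcongr
      exact le_of_lt ht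

/-- The tangent-line bound `log y ≤ y - 1` at `y = t / x`. -/
lemma rpow_le_rpow_mul_exp {t : ℝ} (hm : 0 ≤ m) (hx : 0 < x) (ht : 0 < t) :
    t ^ m ≤ x ^ m * exp (m * (t / x - 1)) := by
  have htx : 0 < t / x := div_pos ht hx
  calc t ^ m = x ^ m * (t / x) ^ m := by
        rw [← mul_rpow hx.le htx.le, mul_div_cancel₀ _ hx.ne']
    _ ≤ x ^ m * exp (m * (t / x - 1)) := by
      rw [rpow_def_of_pos htx, mul_comm (log _)]
      gcongr
      exact log_le_sub_one_of_pos htx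

lemma integral_Ioi_rpow_mul_exp_neg_le (hm : 0 ≤ m) (hmx : m < x) :
    ∫ t in Ioi x, t ^ m * exp (-t) ≤ x ^ m * exp (-x) * (x / (x - m)) := by
  have hx : 0 < x := hm.trans_lt hmx
  have hrate : m / x - 1 < 0 := by rw [sub_neg, div_lt_one hx]; exact hmx
  calc ∫ t in Ioi x, t ^ m * exp (-t)
      ≤ ∫ t in Ioi x, x ^ m * exp (-m) * exp ((m / x - 1) * t) := by
        refine setIntegral_mono_on (integrableOn_rpow_mul_exp_neg_Ioi (by linarith) hx.le)
          ((integrableOn_exp_mul_Ioi hrate x).const_mul _) measurableSet_Ioi fun t ht => ?_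
        calc t ^ m * exp (-t) ≤ x ^ m * exp (m * (t / x - 1)) * exp (-t) := by
              gcongr
              exact rpow_le_rpow_mul_exp hm hx (hx.trans ht)
          _ = x ^ m * exp (-m) * exp ((m / x - 1) * t) := by
              rw [mul_assoc, mul_assoc, ← exp_add, ← exp_add]
              congr 2
              field_simp
              ring
    _ = x ^ m * exp (-x) * (x / (x - m)) := by
        have hxm : x - m ≠ 0 := by linarith
        have hmx' : m - x ≠ 0 := by linarith
        rw [integral_const_mul, integral_exp_mul_Ioi hrate,
          show (m / x - 1) * x = m + -x by field_simp; ring, exp_add, exp_neg m]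
        field_simp
        ring

end IncompleteGammaBounds

section UpperGammaAsymptotics

variable {s x : ℝ}

lemma upperGamma_pos (hs : 1 ≤ s) (hx : 0 < x) : 0 < upperGamma s x :=
  (by positivity : 0 < x ^ (s - 1) * exp (-x)).trans_le
    (rpow_mul_exp_neg_le_integral_Ioi (by linarith) hx.le)

lemma log_upperGamma_bounds (hs : 1 ≤ s) (hx : s - 1 < x) :
    0 ≤ log (upperGamma s x) + x - (s - 1) * log x ∧
      log (upperGamma s x) + x - (s - 1) * log x ≤ log (x / (x - (s - 1))) := by
  have hx0 : 0 < x := by linarith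
  have hlogA : log (x ^ (s - 1) * exp (-x)) = (s - 1) * log x - x := by
    rw [log_mul (by positivity) (exp_ne_zero _), log_rpow hx0, log_exp]; ring
  have hΓ := upperGamma_pos hs hx0
  constructor
  · have := log_le_log (by positivity)
      (rpow_mul_exp_neg_le_integral_Ioi (m := s - 1) (by linarith) hx0.le)
    rw [hlogA] at this
    rw [upperGamma]
    linarith
  · have := log_le_log hΓ (integral_Ioi_rpow_mul_exp_neg_le (by linarith) hx)
    rw [log_mul (by positivity) (div_pos hx0 (by linarith)).ne', hlogA] at this
    linarith

lemma tendsto_log_div_self_sub_const_atTop (c : ℝ) :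
    Tendsto (fun x => log (x / (x - c))) atTop (nhds 0) := by
  have h : Tendsto (fun x : ℝ => 1 + c * (x - c)⁻¹) atTop (nhds (1 + c * 0)) :=
    tendsto_const_nhds.add ((tendsto_inv_atTop_zero.comp (tendsto_atTop_add_const_right
      atTop (-c) tendsto_id)).const_mul c)
  rw [mul_zero, add_zero] at h
  have hlog := (continuousAt_log one_ne_zero).tendsto.comp
    (h.congr' (f₂ := fun x => x / (x - c)) ?_)
  · rwa [log_one] at hlog
  filter_upwards [eventually_gt_atTop c] with x hx
  have : x - c ≠ 0 := by linarith
  field_simp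
  ring

lemma tendsto_log_upperGamma_add_self_sub_mul_log (hs : 1 ≤ s) :
    Tendsto (fun x => log (upperGamma s x) + x - (s - 1) * log x) atTop (nhds 0) :=
  tendsto_of_tendsto_of_tendsto_of_le_of_le' tendsto_const_nhds
    (tendsto_log_div_self_sub_const_atTop (s - 1))
    ((eventually_gt_atTop (s - 1)).mono fun _ hx => (log_upperGamma_bounds hs hx).1)
    ((eventually_gt_atTop (s - 1)).mono fun _ hx => (log_upperGamma_bounds hs hx).2)

end UpperGammaAsymptotics

lemma isEquivalent_self_add_mul_log_add {r c : ℝ} {ε : ℝ → ℝ} (hε : Tendsto ε atTop (nhds c)) :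
    (fun x => x + r * log x + ε x) ~[atTop] id := by
  refine IsLittleO.isEquivalent ?_
  have : (fun x => r * log x + ε x) =o[atTop] id :=
    (isLittleO_log_id_atTop.const_mul_left r).add
      ((hε.isBigO_one ℝ).trans_isLittleO (isLittleO_const_id_atTop 1))
  refine this.congr_left fun x => ?_
  rw [Pi.sub_apply, id]
  ring

lemma tendsto_log_upperGamma_div_const_div_rate {s C k : ℝ} (hs : 1 ≤ s) (hC : C ≠ 0) (hk : k ≠ 0) :
    Tendsto (fun x => log (upperGamma s x / C) / (k * (x / k - 1 - log (x / k))))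
      atTop (nhds (-1)) := by
  have hnum : (fun x => log (upperGamma s x / C)) ~[atTop] fun x => -x := by
    refine (isEquivalent_self_add_mul_log_add (r := 1 - s)
      ((tendsto_log_upperGamma_add_self_sub_mul_log hs).const_sub (log C))).neg.congr_left ?_
    filter_upwards [eventually_gt_atTop 0] with x hx
    rw [log_div (upperGamma_pos hs hx).ne' hC]
    ring
  have hden : (fun x => k * (x / k - 1 - log (x / k))) ~[atTop] id := by
    refine (isEquivalent_self_add_mul_log_add (r := -k) (ε := fun _ => k * log k - k)
      tendsto_const_nhds).congr_left ?_
    filter_upwards [eventually_gt_atTop 0] with x hx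
    rw [log_div hx.ne' hk]
    field_simp
    ring
  refine (hnum.div hden).symm.tendsto_nhds (tendsto_const_nhds.congr' ?_)
  filter_upwards [eventually_gt_atTop 0] with x hx
  simp [hx.ne']

/-- With `P(z) = Γ(M, αMz/(aT))/(M-1)!` and
`I*(z) = M (α z/(aT) - 1 - log (α z/(aT)))`, one has `log P(z) / I*(z) → -1`
as `z → ∞`. -/
theorem rod_linear_forcing_ldp_limit
    (M : ℕ) (hM : 1 ≤ M) (a T α : ℝ) (ha : 0 < a) (hT : 0 < T) (hα : 0 < α)
    (P Istar : ℝ → ℝ)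
    (hP : ∀ z, P z = upperGamma M (α * M * z / (a * T)) / Nat.factorial (M - 1))
    (hIstar : ∀ z, Istar z
      = M * (α * z / (a * T) - 1 - Real.log (α * z / (a * T)))) :
    Tendsto (fun z => Real.log (P z) / Istar z) atTop (nhds (-1)) := by
  have hM0 : (0 : ℝ) < M := by exact_mod_cast hM
  have hscale : Tendsto (fun z => α * M * z / (a * T)) atTop atTop := by
    simp_rw [mul_div_right_comm _ _ (a * T)]
    exact tendsto_id.const_mul_atTop (by positivity)
  refine ((tendsto_log_upperGamma_div_const_div_rate (s := M) (by exact_mod_cast hM)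
    (Nat.cast_ne_zero.mpr (M - 1).factorial_ne_zero) hM0.ne').comp hscale).congr fun z => ?_
  simp only [Function.comp, hP, hIstar]
  congr 4 <;> field_simp
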